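/- Let η1, η2, η ∈ [0,1] and let (B_j)_{j∈J} be a finite family of N×N complex matrices with Σ_j B_j† B_j = 1 (Kraus operators of a quantum channel P on ℂ^N). (i) If (1/N) Σ_{k∈ZMod N} Σ_j |(B_j F)_{−k,k}|² ≥ 1 − η1 (P ∈ T1(η1)) and (1/N) Σ_k Σ_j |(F† B_j)_{k,k}|² ≥ 1 − η2 (P ∈ T2(η2)), then Σ_j |Tr(F† B_j)/N|² ≥ 1 − (η1 + η2) (P ∈ T3(η1+η2)). (ii) Conversely, if Σ_j |Tr(F† B_j)/N|² ≥ 1 − η (P ∈ T3(η)), then P ∈ T1(η) and P ∈ T2(η). -/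

import Mathlib

open scoped BigOperators ComplexConjugate
open Finset Matrix

/-- The `N × N` quantum Fourier transform matrix, with entries `F j k = ω^{jk} / √N`,
where `ω = exp(2πi/N)`. -/
noncomputable def QFT (N : ℕ) [NeZero N] : Matrix (ZMod N) (ZMod N) ℂ :=
  fun j k => Complex.exp (2 * (Real.pi : ℂ) * Complex.I * (j.val : ℂ) * (k.val : ℂ) / (N : ℂ))
    / (Real.sqrt N : ℂ)

/-!
Write `M = F† B` for a Kraus operator `B`. Since `B F = F M F`, the Fourier-basis diagonal
`k ↦ (B F)_{-k,k}` is `√N` times the Fourier transform of `d ↦ c_d`, the mean of the `d`-th cyclic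
diagonal `m ↦ M_{m,m+d}`; by Parseval its mean square is `∑_d |c_d|²`. Here `c_0 = Tr M / N`,
and Cauchy–Schwarz bounds every other `|c_d|²` by the mean square of its diagonal. These
off-diagonal mean squares, together with the computational-basis diagonal `d = 0`, add up to
`‖B‖²_F / N`, and `∑_j ‖B_j‖²_F = N`; this gives `T1 + T2 ≤ T3 + 1`, i.e. (i). For (ii),
`Tr M = ∑_k M_{k,k} = ∑_k (B F)_{-k,k}`, so Cauchy–Schwarz gives `T3 ≤ T1` and `T3 ≤ T2`.
-/

open ZMod (stdAddChar)

section SumNormSq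

variable {ι κ : Type*} [Fintype ι] [Fintype κ]

lemma ofReal_sum_norm_sq (v : ι → ℂ) : ((∑ i, ‖v i‖ ^ 2 : ℝ) : ℂ) = star v ⬝ᵥ v := by
  push_cast
  simp only [dotProduct, Pi.star_apply, Complex.star_def, Complex.conj_mul']

lemma ofReal_sum_sum_norm_sq (A : Matrix ι κ ℂ) :
    ((∑ i, ∑ k, ‖A i k‖ ^ 2 : ℝ) : ℂ) = (Aᴴ * A).trace := by
  rw [Finset.sum_comm]
  push_cast
  simp only [trace, Matrix.diag, mul_apply, conjTranspose_apply, Complex.star_def,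
    Complex.conj_mul']

lemma sum_sum_sum_norm_sq_eq_card {J : Type*} [Fintype J] [DecidableEq ι] {B : J → Matrix ι ι ℂ}
    (hB : ∑ j, (B j)ᴴ * B j = 1) : ∑ j, ∑ i, ∑ k, ‖B j i k‖ ^ 2 = Fintype.card ι := by
  apply Complex.ofReal_injective
  simp only [Complex.ofReal_sum (s := Finset.univ) (f := fun j => ∑ i, ∑ k, ‖B j i k‖ ^ 2),
    ofReal_sum_sum_norm_sq, ← trace_sum, hB, trace_one, Complex.ofReal_natCast]

variable [DecidableEq ι]

lemma sum_norm_sq_mulVec_of_mem_unitaryGroup {U : Matrix ι ι ℂ} (hU : U ∈ unitaryGroup ι ℂ)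
    (v : ι → ℂ) : ∑ i, ‖(U *ᵥ v) i‖ ^ 2 = ∑ i, ‖v i‖ ^ 2 := by
  apply Complex.ofReal_injective
  rw [ofReal_sum_norm_sq, ofReal_sum_norm_sq, star_mulVec, ← dotProduct_mulVec, mulVec_mulVec,
    ← star_eq_conjTranspose, mem_unitaryGroup_iff'.1 hU, one_mulVec]

lemma sum_sum_norm_sq_mul_of_mem_unitaryGroup {U : Matrix ι ι ℂ} (hU : U ∈ unitaryGroup ι ℂ)
    (A : Matrix ι κ ℂ) : ∑ i, ∑ k, ‖(U * A) i k‖ ^ 2 = ∑ i, ∑ k, ‖A i k‖ ^ 2 := by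
  rw [Finset.sum_comm, Finset.sum_comm (f := fun i k => ‖A i k‖ ^ 2)]
  exact Finset.sum_congr rfl fun k _ => sum_norm_sq_mulVec_of_mem_unitaryGroup hU (fun i => A i k)

end SumNormSq

lemma norm_sum_div_card_sq_le {ι : Type*} [Fintype ι] (z : ι → ℂ) :
    ‖(∑ i, z i) / Fintype.card ι‖ ^ 2 ≤ (∑ i, ‖z i‖ ^ 2) / Fintype.card ι := by
  rw [norm_div, Complex.norm_natCast, div_pow]
  set c : ℝ := (Fintype.card ι : ℝ)
  rcases (Fintype.card ι).eq_zero_or_pos with h | h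
  · simp [c, h]
  have hc : 0 < c := by simp [c, h]
  have hcs : ‖∑ i, z i‖ ^ 2 ≤ c * ∑ i, ‖z i‖ ^ 2 :=
    calc ‖∑ i, z i‖ ^ 2 ≤ (∑ i, ‖z i‖) ^ 2 := by gcongr; exact norm_sum_le _ _
      _ ≤ c * ∑ i, ‖z i‖ ^ 2 := sq_sum_le_card_mul_sum_sq
  rw [div_le_div_iff₀ (by positivity) hc]
  calc ‖∑ i, z i‖ ^ 2 * c ≤ c * (∑ i, ‖z i‖ ^ 2) * c := by gcongr
    _ = _ := by ring

lemma ofReal_sqrt_mul_self (n : ℕ) : ((√n : ℝ) : ℂ) * (√n : ℝ) = n := by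
  rw [← Complex.ofReal_mul, Real.mul_self_sqrt (Nat.cast_nonneg n), Complex.ofReal_natCast]

section QFT

variable {N : ℕ} [NeZero N]

lemma QFT_apply (j k : ZMod N) : QFT N j k = stdAddChar (j * k) / (√N : ℝ) := by
  have hjk : j * k = ((j.val * k.val : ℕ) : ZMod N) := by simp
  rw [QFT, hjk, ZMod.stdAddChar_apply, ZMod.toCircle_natCast]
  push_cast
  ring_nf

lemma conjTranspose_QFT_apply (j k : ZMod N) : (QFT N)ᴴ j k = QFT N j (-k) := by
  rw [conjTranspose_apply, QFT_apply, QFT_apply, star_div₀, Complex.star_def,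
    ← AddChar.map_neg_eq_conj, Complex.conj_ofReal, mul_neg, mul_comm]

lemma QFT_mul_conjTranspose_QFT : QFT N * (QFT N)ᴴ = 1 := by
  ext p q
  have hN : (N : ℂ) ≠ 0 := NeZero.ne _
  have hpq (x : ZMod N) : p * x + x * -q = x * (p - q) := by ring
  simp only [mul_apply, conjTranspose_QFT_apply, QFT_apply, div_mul_div_comm,
    ← AddChar.map_add_eq_mul, ofReal_sqrt_mul_self, hpq, ← Finset.sum_div,
    AddChar.sum_mulShift _ (ZMod.isPrimitive_stdAddChar N), ZMod.card, one_apply, sub_eq_zero]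
  split_ifs <;> simp [hN]

lemma QFT_mem_unitaryGroup : QFT N ∈ unitaryGroup (ZMod N) ℂ :=
  mem_unitaryGroup_iff.2 QFT_mul_conjTranspose_QFT

lemma sum_mul_QFT_apply_neg_self (C : Matrix (ZMod N) (ZMod N) ℂ) :
    ∑ k, (C * QFT N) (-k) k = ((QFT N)ᴴ * C).trace := by
  rw [trace_mul_comm, ← Equiv.sum_comp (Equiv.neg (ZMod N))]
  simp only [Equiv.neg_apply, neg_neg, trace, Matrix.diag, mul_apply, conjTranspose_QFT_apply]

noncomputable def cyclicDiagMean (M : Matrix (ZMod N) (ZMod N) ℂ) (d : ZMod N) : ℂ :=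
  (∑ m, M m (m + d)) / N

lemma cyclicDiagMean_zero (M : Matrix (ZMod N) (ZMod N) ℂ) :
    cyclicDiagMean M 0 = M.trace / N := by
  simp only [cyclicDiagMean, add_zero, trace, Matrix.diag]

lemma norm_cyclicDiagMean_sq_le (M : Matrix (ZMod N) (ZMod N) ℂ) (d : ZMod N) :
    ‖cyclicDiagMean M d‖ ^ 2 ≤ (∑ m, ‖M m (m + d)‖ ^ 2) / N := by
  simpa only [cyclicDiagMean, ZMod.card] using norm_sum_div_card_sq_le fun m => M m (m + d)

lemma sum_sum_eq_sum_sum_add {G β : Type*} [AddGroup G] [Fintype G] [AddCommMonoid β]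
    (g : G → G → β) : ∑ p, ∑ q, g p q = ∑ d, ∑ m, g m (m + d) := by
  rw [Finset.sum_comm (f := fun d m => g m (m + d))]
  exact Finset.sum_congr rfl fun m _ => (Equiv.sum_comp (Equiv.addLeft m) _).symm

lemma QFT_mul_mul_QFT_apply_neg_self (M : Matrix (ZMod N) (ZMod N) ℂ) (k : ZMod N) :
    (QFT N * M * QFT N) (-k) k = (√N : ℝ) * (QFT N *ᵥ cyclicDiagMean M) k := by
  simp only [mul_apply, mulVec, dotProduct, cyclicDiagMean, Finset.sum_mul, Finset.sum_div,
    Finset.mul_sum]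
  rw [Finset.sum_comm]
  conv_rhs => rw [Finset.sum_comm]
  refine Finset.sum_congr rfl fun p _ => ?_
  rw [← Equiv.sum_comp (Equiv.addLeft p)]
  refine Finset.sum_congr rfl fun d _ => ?_
  have h : -k * p + (p + d) * k = k * d := by ring
  simp only [Equiv.coe_addLeft, QFT_apply, ← ofReal_sqrt_mul_self N]
  rw [← h, AddChar.map_add_eq_mul]
  field_simp

lemma sum_norm_sq_QFT_mul_mul_QFT_apply_neg_self (M : Matrix (ZMod N) (ZMod N) ℂ) :
    ∑ k, ‖(QFT N * M * QFT N) (-k) k‖ ^ 2 = N * ∑ d, ‖cyclicDiagMean M d‖ ^ 2 := by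
  simp only [QFT_mul_mul_QFT_apply_neg_self, norm_mul, mul_pow, Complex.norm_real,
    Real.norm_eq_abs, sq_abs, Real.sq_sqrt (Nat.cast_nonneg N), ← Finset.mul_sum,
    sum_norm_sq_mulVec_of_mem_unitaryGroup QFT_mem_unitaryGroup]

lemma sum_norm_sq_QFT_mul_mul_QFT_add_sum_norm_sq_diag_le (M : Matrix (ZMod N) (ZMod N) ℂ) :
    (∑ k, ‖(QFT N * M * QFT N) (-k) k‖ ^ 2) / N + (∑ k, ‖M k k‖ ^ 2) / N
      ≤ ‖M.trace / N‖ ^ 2 + (∑ p, ∑ q, ‖M p q‖ ^ 2) / N := by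
  have hN : (N : ℝ) ≠ 0 := NeZero.ne _
  have hmean : ∑ d, ‖cyclicDiagMean M d‖ ^ 2
      = ‖M.trace / N‖ ^ 2 + ∑ d ∈ univ.erase 0, ‖cyclicDiagMean M d‖ ^ 2 := by
    rw [← cyclicDiagMean_zero]
    exact (Finset.add_sum_erase _ _ (mem_univ 0)).symm
  have hfrob : ∑ p, ∑ q, ‖M p q‖ ^ 2
      = ∑ k, ‖M k k‖ ^ 2 + ∑ d ∈ univ.erase 0, ∑ m, ‖M m (m + d)‖ ^ 2 := by
    rw [sum_sum_eq_sum_sum_add fun p q => ‖M p q‖ ^ 2, ← Finset.add_sum_erase _ _ (mem_univ 0)]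
    simp only [add_zero]
  have hoff : ∑ d ∈ univ.erase 0, ‖cyclicDiagMean M d‖ ^ 2
      ≤ (∑ d ∈ univ.erase 0, ∑ m, ‖M m (m + d)‖ ^ 2) / N := by
    rw [Finset.sum_div]
    exact Finset.sum_le_sum fun d _ => norm_cyclicDiagMean_sq_le M d
  rw [sum_norm_sq_QFT_mul_mul_QFT_apply_neg_self, mul_div_cancel_left₀ _ hN, hmean, hfrob,
    add_div]
  linarith

lemma sum_norm_sq_mul_QFT_add_sum_norm_sq_diag_le (C : Matrix (ZMod N) (ZMod N) ℂ) :
    (∑ k, ‖(C * QFT N) (-k) k‖ ^ 2) / N + (∑ k, ‖((QFT N)ᴴ * C) k k‖ ^ 2) / N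
      ≤ ‖((QFT N)ᴴ * C).trace / N‖ ^ 2 + (∑ p, ∑ q, ‖C p q‖ ^ 2) / N := by
  have hC : QFT N * ((QFT N)ᴴ * C) = C := by
    rw [← Matrix.mul_assoc, QFT_mul_conjTranspose_QFT, Matrix.one_mul]
  have := sum_norm_sq_QFT_mul_mul_QFT_add_sum_norm_sq_diag_le ((QFT N)ᴴ * C)
  rwa [hC, sum_sum_norm_sq_mul_of_mem_unitaryGroup (U := (QFT N)ᴴ)
    (Unitary.star_mem QFT_mem_unitaryGroup)] at this

section Channel

-- `P ∈ T1(η)`, `P ∈ T2(η)`, `P ∈ T3(η)` say that these three quantities are at least `1 - η`.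

variable {J : Type*} [Fintype J] (B : J → Matrix (ZMod N) (ZMod N) ℂ)

noncomputable def fourierBasisFidelity : ℝ :=
  (∑ k, ∑ j, ‖(B j * QFT N) (-k) k‖ ^ 2) / N

noncomputable def computationalBasisFidelity : ℝ :=
  (∑ k, ∑ j, ‖((QFT N)ᴴ * B j) k k‖ ^ 2) / N

noncomputable def coherentFidelity : ℝ :=
  ∑ j, ‖((QFT N)ᴴ * B j).trace / N‖ ^ 2

lemma coherentFidelity_le_fourierBasisFidelity :
    coherentFidelity B ≤ fourierBasisFidelity B := by
  rw [coherentFidelity, fourierBasisFidelity, Finset.sum_comm, Finset.sum_div]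
  gcongr with j
  rw [← sum_mul_QFT_apply_neg_self]
  simpa only [ZMod.card] using norm_sum_div_card_sq_le fun k => (B j * QFT N) (-k) k

lemma coherentFidelity_le_computationalBasisFidelity :
    coherentFidelity B ≤ computationalBasisFidelity B := by
  rw [coherentFidelity, computationalBasisFidelity, Finset.sum_comm, Finset.sum_div]
  gcongr with j
  simpa only [ZMod.card, trace, Matrix.diag] using
    norm_sum_div_card_sq_le fun k => ((QFT N)ᴴ * B j) k k

lemma fourierBasisFidelity_add_computationalBasisFidelity_le (hB : ∑ j, (B j)ᴴ * B j = 1) :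
    fourierBasisFidelity B + computationalBasisFidelity B ≤ coherentFidelity B + 1 := by
  have hN : (N : ℝ) ≠ 0 := NeZero.ne _
  rw [fourierBasisFidelity, computationalBasisFidelity, coherentFidelity,
    Finset.sum_comm, Finset.sum_div, Finset.sum_comm, Finset.sum_div, ← Finset.sum_add_distrib]
  calc _ ≤ ∑ j, (‖((QFT N)ᴴ * B j).trace / N‖ ^ 2 + (∑ p, ∑ q, ‖B j p q‖ ^ 2) / N) :=
        Finset.sum_le_sum fun j _ => sum_norm_sq_mul_QFT_add_sum_norm_sq_diag_le (B j)
    _ = _ := by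
      rw [Finset.sum_add_distrib, ← Finset.sum_div, sum_sum_sum_norm_sq_eq_card hB, ZMod.card,
        div_self hN]

end Channel

end QFT

theorem t1_t2_t3_equivalences_general (N : ℕ) [NeZero N] (η1 η2 η : ℝ)
    (J : Type) [Fintype J] (B : J → Matrix (ZMod N) (ZMod N) ℂ)
    (hK : ∑ j : J, (B j)ᴴ * B j = 1) :
    ((((1 / N : ℝ) * ∑ k : ZMod N, ∑ j : J,
        ‖(B j * QFT N) (-k) k‖ ^ 2 ≥ 1 - η1) ∧
      ((1 / N : ℝ) * ∑ k : ZMod N, ∑ j : J,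
        ‖((QFT N)ᴴ * B j) k k‖ ^ 2 ≥ 1 - η2)) →
      ∑ j : J, ‖((QFT N)ᴴ * B j).trace / (N : ℂ)‖ ^ 2 ≥ 1 - (η1 + η2)) ∧
    ((∑ j : J, ‖((QFT N)ᴴ * B j).trace / (N : ℂ)‖ ^ 2 ≥ 1 - η) →
      (((1 / N : ℝ) * ∑ k : ZMod N, ∑ j : J,
        ‖(B j * QFT N) (-k) k‖ ^ 2 ≥ 1 - η) ∧
      ((1 / N : ℝ) * ∑ k : ZMod N, ∑ j : J,
        ‖((QFT N)ᴴ * B j) k k‖ ^ 2 ≥ 1 - η))) := by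
  have h1 := coherentFidelity_le_fourierBasisFidelity B
  have h2 := coherentFidelity_le_computationalBasisFidelity B
  have h12 := fourierBasisFidelity_add_computationalBasisFidelity_le B hK
  simp only [fourierBasisFidelity, computationalBasisFidelity, coherentFidelity] at h1 h2 h12
  simp only [one_div_mul_eq_div]
  refine ⟨fun ⟨hT1, hT2⟩ => ?_, fun hT3 => ⟨?_, ?_⟩⟩ <;> linarith

/-- For a quantum channel `P` with Kraus operators `B j`:
(i) if `P ∈ T1(η1)` and `P ∈ T2(η2)` then `P ∈ T3(η1 + η2)`;
(ii) if `P ∈ T3(η)` then `P ∈ T1(η)` and `P ∈ T2(η)`. -/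
theorem t1_t2_t3_equivalences (N : ℕ) [NeZero N] (η1 η2 η : ℝ)
    (hη1 : η1 ∈ Set.Icc (0 : ℝ) 1) (hη2 : η2 ∈ Set.Icc (0 : ℝ) 1)
    (hη : η ∈ Set.Icc (0 : ℝ) 1)
    (J : Type) [Fintype J] (B : J → Matrix (ZMod N) (ZMod N) ℂ)
    (hK : ∑ j : J, (B j)ᴴ * B j = 1) :
    ((((1 / N : ℝ) * ∑ k : ZMod N, ∑ j : J,
        ‖(B j * QFT N) (-k) k‖ ^ 2 ≥ 1 - η1) ∧
      ((1 / N : ℝ) * ∑ k : ZMod N, ∑ j : J,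
        ‖((QFT N)ᴴ * B j) k k‖ ^ 2 ≥ 1 - η2)) →
      ∑ j : J, ‖((QFT N)ᴴ * B j).trace / (N : ℂ)‖ ^ 2 ≥ 1 - (η1 + η2)) ∧
    ((∑ j : J, ‖((QFT N)ᴴ * B j).trace / (N : ℂ)‖ ^ 2 ≥ 1 - η) →
      (((1 / N : ℝ) * ∑ k : ZMod N, ∑ j : J,
        ‖(B j * QFT N) (-k) k‖ ^ 2 ≥ 1 - η) ∧
      ((1 / N : ℝ) * ∑ k : ZMod N, ∑ j : J,
        ‖((QFT N)ᴴ * B j) k k‖ ^ 2 ≥ 1 - η))) :=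
  t1_t2_t3_equivalences_general N η1 η2 η J B hK
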